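/- Let k ≥ 1, set ζ = e^{2πi/(2k+1)} ∈ ℂ, and let f : S¹ → ℝ^{2k+1} be a continuous map on the unit circle S¹ ⊆ ℂ with f(−z) = −f(z) for all z ∈ S¹. Then there exist signs e₀, …, e_{2k} ∈ {+1, −1} and z ∈ S¹ such that 0 ∈ ℝ^{2k+1} lies in the convex hull of the image f(X) of the finite set X = {eᵢ·z·ζⁱ : i = 0, …, 2k} ⊆ S¹, and X has diameter at most π − π/(2k+1). -/

import Mathlib

/-!
Write `n = 2k + 1` and `uⱼ(z) = f(z ζʲ)`. The determinant `D(z)` of `u₀(z), …, u_{2k}(z)` is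
continuous on the circle and, `f` being odd and `n` odd, satisfies `D(-z) = -D(z)`; so it vanishes
at some `z`. A linear dependence `∑ vⱼ uⱼ(z) = 0` becomes a convex combination after replacing
`z ζʲ` by `sign(vⱼ) z ζʲ`, again by oddness. All points `±z ζʲ` are `2n`-th roots of `z^{2n}`, and
no two chosen points are antipodal, so their pairwise angular distances are at most `π - π/n`.
-/

open Metric

/-- The arc-length metric on the unit circle in `ℂ`: for unit complex numbers `z, w`
we have `circleDist z (exp (θ * I) * z) = |θ|` whenever `|θ| ≤ π`. -/
noncomputable def circleDist (z w : ℂ) : ℝ := |Complex.arg (w / z)|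

theorem IsPreconnected.exists_eq_zero_of_map_eq_neg {X α : Type*} [TopologicalSpace X]
    [AddCommGroup α] [LinearOrder α] [IsOrderedAddMonoid α] [TopologicalSpace α]
    [OrderClosedTopology α]
    {S : Set X} (hS : IsPreconnected S) {a b : X} (ha : a ∈ S) (hb : b ∈ S) {g : X → α}
    (hg : ContinuousOn g S) (hab : g b = -g a) : ∃ y ∈ S, g y = 0 := by
  rcases le_total (g a) 0 with h | h
  · exact hS.intermediate_value ha hb hg ⟨h, by rw [hab]; exact neg_nonneg.mpr h⟩
  · exact hS.intermediate_value hb ha hg ⟨by rw [hab]; exact neg_nonpos.mpr h, h⟩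

namespace Module.Basis

variable {ι : Type*} [Fintype ι] [DecidableEq ι]

theorem det_neg {R M : Type*} [CommRing R] [AddCommGroup M] [Module R M] (b : Basis ι R M)
    (v : ι → M) : b.det (-v) = (-1) ^ Fintype.card ι * b.det v := by
  have h := b.det.map_smul_univ (fun _ => -1) v
  simp only [neg_one_smul, Finset.prod_const, Finset.card_univ, smul_eq_mul] at h
  exact h

theorem continuous_det {𝕜 E : Type*} [NontriviallyNormedField 𝕜] [CompleteSpace 𝕜]
    [AddCommGroup E] [Module 𝕜 E] [TopologicalSpace E] [IsTopologicalAddGroup E]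
    [ContinuousSMul 𝕜 E] [T2Space E] (b : Basis ι 𝕜 E) : Continuous fun v : ι → E => b.det v := by
  have := b.finiteDimensional_of_finite
  simp_rw [b.det_apply]
  refine Continuous.matrix_det (continuous_pi fun i => continuous_pi fun j => ?_)
  exact (b.coord i).continuous_of_finiteDimensional.comp (continuous_apply j)

end Module.Basis

theorem exists_not_linearIndependent_of_map_neg {X ι E : Type*} [TopologicalSpace X] [Fintype ι]
    [DecidableEq ι] [AddCommGroup E] [Module ℝ E] [TopologicalSpace E] [IsTopologicalAddGroup E]
    [ContinuousSMul ℝ E] [T2Space E] (b : Module.Basis ι ℝ E) (hι : Odd (Fintype.card ι))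
    {S : Set X} (hS : IsPreconnected S) {a a' : X} (ha : a ∈ S) (ha' : a' ∈ S)
    {u : X → ι → E} (hu : ContinuousOn u S) (hneg : u a' = -u a) :
    ∃ y ∈ S, ¬LinearIndependent ℝ (u y) := by
  have := b.finiteDimensional_of_finite
  obtain ⟨y, hy, hdet⟩ := hS.exists_eq_zero_of_map_eq_neg ha ha'
    (b.continuous_det.comp_continuousOn hu)
    (by simp only [Function.comp_apply, hneg, b.det_neg, hι.neg_one_pow, neg_one_mul])
  refine ⟨y, hy, fun hli => ?_⟩
  have hspan := hli.span_eq_top_of_card_eq_finrank' (Module.finrank_eq_card_basis b).symm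
  exact (b.is_basis_iff_det.mp ⟨hli, hspan⟩).ne_zero hdet

theorem exists_signs_zero_mem_convexHull {ι E : Type*} [Fintype ι] [AddCommGroup E] [Module ℝ E]
    {u : ι → E} (hu : ¬LinearIndependent ℝ u) :
    ∃ e : ι → ℝ, (∀ i, e i = 1 ∨ e i = -1) ∧
      (0 : E) ∈ convexHull ℝ (Set.range fun i => e i • u i) := by
  obtain ⟨g, hg, i₀, hi₀⟩ := Fintype.not_linearIndependent_iff.mp hu
  have hsign : ∀ i, ∃ s : ℝ, (s = 1 ∨ s = -1) ∧ s * |g i| = g i := fun i => by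
    rcases le_or_gt 0 (g i) with h | h
    · exact ⟨1, .inl rfl, by rw [one_mul, abs_of_nonneg h]⟩
    · exact ⟨-1, .inr rfl, by rw [abs_of_neg h, neg_one_mul, neg_neg]⟩
  choose e he hge using hsign
  have hsum : ∑ i, |g i| • e i • u i = 0 := by
    simp_rw [smul_smul, mul_comm |_|, hge, hg]
  have hpos : 0 < ∑ i, |g i| :=
    Finset.sum_pos' (fun i _ => abs_nonneg _) ⟨i₀, Finset.mem_univ _, abs_pos.mpr hi₀⟩
  have hc := Finset.univ.centerMass_mem_convexHull (fun i _ => abs_nonneg (g i)) hpos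
    (fun i _ => Set.mem_range_self (f := fun i => e i • u i) i)
  exact ⟨e, he, by rwa [Finset.centerMass, hsum, smul_zero] at hc⟩

theorem map_smul_of_sign {R V E : Type*} [Ring R] [AddCommGroup V] [Module R V] [AddCommGroup E]
    [Module R E] {S : Set V} {f : V → E} (hodd : ∀ z ∈ S, f (-z) = -f z) {z : V} (hz : z ∈ S)
    {s : R} (hs : s = 1 ∨ s = -1) : f (s • z) = s • f z := by
  rcases hs with rfl | rfl <;> simp [hodd z hz]

namespace Complex

theorem abs_arg_le_pi_sub_pi_div_of_pow_two_mul_eq_one {w : ℂ} {n : ℕ}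
    (hw : w ^ (2 * n) = 1) (hw₁ : w ≠ -1) : |arg w| ≤ Real.pi - Real.pi / n := by
  rcases n.eq_zero_or_pos with rfl | hn
  · simpa using abs_arg_le_pi w
  have hnR : (0 : ℝ) < n := by exact_mod_cast hn
  have hexp : exp (arg w * I) = w := by
    simpa [norm_eq_one_of_pow_eq_one hw (by omega)] using norm_mul_exp_arg_mul_I w
  obtain ⟨m, hm⟩ := exp_eq_one_iff.mp
    (by rw [exp_nat_mul, hexp, hw] : exp (↑(2 * n) * (arg w * I)) = 1)
  have hθ : arg w = m * Real.pi / n := by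
    have := congrArg Complex.im hm
    simp only [Nat.cast_mul, Nat.cast_ofNat, mul_im, mul_re, re_ofNat, natCast_re, im_ofNat,
      natCast_im, mul_zero, sub_zero, ofReal_re, I_im, mul_one, ofReal_im, I_re, add_zero,
      zero_mul, sub_self, intCast_re, intCast_im] at this
    field_simp
    linarith
  have hlt : |arg w| < Real.pi := abs_lt.mpr ⟨neg_pi_lt_arg w, (arg_le_pi w).lt_of_ne
    fun h => hw₁ (by rw [← hexp, h, exp_pi_mul_I])⟩
  rw [hθ, abs_div, abs_mul, abs_of_pos Real.pi_pos, Nat.abs_cast] at hlt ⊢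
  have hm_le : |(m : ℝ)| ≤ n - 1 := by
    have : |m| < n := by
      rw [div_lt_iff₀ hnR] at hlt
      exact_mod_cast (by nlinarith [Real.pi_pos] : |(m : ℝ)| < n)
    exact_mod_cast (by omega : |m| ≤ (n : ℤ) - 1)
  calc |(m : ℝ)| * Real.pi / n ≤ (n - 1) * Real.pi / n := by gcongr
    _ = Real.pi - Real.pi / n := by field_simp

end Complex

theorem IsPrimitiveRoot.eq_of_sign_mul_pow_eq {R : Type*} [CommRing R] [IsDomain R] {ζ : R}
    {n : ℕ} (hζ : IsPrimitiveRoot ζ n) (hn : Odd n) {s t : R} (hs : s = 1 ∨ s = -1)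
    (ht : t = 1 ∨ t = -1) {i j : ℕ} (hi : i < n) (hj : j < n) (h : s * ζ ^ i = t * ζ ^ j) :
    s = t ∧ i = j := by
  have hpow : ∀ r : R, (r = 1 ∨ r = -1) → r ^ n = r := by
    rintro r (rfl | rfl)
    exacts [one_pow n, hn.neg_one_pow]
  have hst : s = t := by
    have := congrArg (· ^ n) h
    simp only [mul_pow, pow_right_comm ζ _ n, hζ.pow_eq_one, one_pow, mul_one] at this
    rwa [hpow s hs, hpow t ht] at this
  subst hst
  have hs₀ : s ≠ 0 := by rcases hs with rfl | rfl <;> simp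
  exact ⟨rfl, hζ.pow_inj hi hj (mul_left_cancel₀ hs₀ h)⟩

theorem IsPrimitiveRoot.abs_arg_div_sign_mul_pow_le {ζ z : ℂ} {n : ℕ} (hζ : IsPrimitiveRoot ζ n)
    (hn : Odd n) (hz : z ≠ 0) {e : Fin n → ℂ} (he : ∀ i, e i = 1 ∨ e i = -1) (i j : Fin n) :
    |Complex.arg (e j * z * ζ ^ (j : ℕ) / (e i * z * ζ ^ (i : ℕ)))| ≤ Real.pi - Real.pi / n := by
  have he₀ : ∀ i, e i ≠ 0 := fun i => by rcases he i with h | h <;> simp [h]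
  have hζ₀ : ζ ≠ 0 := hζ.ne_zero (by rintro rfl; simp at hn)
  have hpow : ∀ i, (e i * z * ζ ^ (i : ℕ)) ^ (2 * n) = z ^ (2 * n) := fun i => by
    have he2 : e i ^ 2 = 1 := by rcases he i with h | h <;> simp [h]
    have hζ2 : (ζ ^ (i : ℕ)) ^ (2 * n) = 1 := by
      rw [show (ζ ^ (i : ℕ)) ^ (2 * n) = ((ζ ^ n) ^ (i : ℕ)) ^ 2 by ring, hζ.pow_eq_one, one_pow,
        one_pow]
    rw [mul_pow, mul_pow, pow_mul, he2, one_pow, one_mul, hζ2, mul_one]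
  apply Complex.abs_arg_le_pi_sub_pi_div_of_pow_two_mul_eq_one
  · rw [div_pow, hpow, hpow, div_self (pow_ne_zero _ hz)]
  · intro h
    rw [div_eq_iff (by simp [he₀, hz, hζ₀])] at h
    have h' : e j * ζ ^ (j : ℕ) = -e i * ζ ^ (i : ℕ) :=
      mul_left_cancel₀ hz (by linear_combination h)
    have hneg : -e i = 1 ∨ -e i = -1 := by rcases he i with h | h <;> simp [h]
    obtain ⟨hji, hij⟩ := hζ.eq_of_sign_mul_pow_eq hn (he j) hneg j.isLt i.isLt h'
    rw [Fin.ext hij] at hji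
    exact he₀ i (by linear_combination hji / 2)

theorem stmt2_general (k : ℕ)
    (ζ : ℂ) (hζ : ζ = Complex.exp (2 * Real.pi * Complex.I / (2 * k + 1)))
    (f : ℂ → EuclideanSpace ℝ (Fin (2 * k + 1)))
    (hf : ContinuousOn f (sphere (0 : ℂ) 1))
    (hodd : ∀ z ∈ sphere (0 : ℂ) 1, f (-z) = -f z) :
    ∃ (e : Fin (2 * k + 1) → ℝ) (z : ℂ),
      (∀ i, e i = 1 ∨ e i = -1) ∧ ‖z‖ = 1 ∧
      (0 : EuclideanSpace ℝ (Fin (2 * k + 1))) ∈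
        convexHull ℝ (f '' Set.range (fun i : Fin (2 * k + 1) => (e i : ℂ) * z * ζ ^ (i : ℕ))) ∧
      ∀ x ∈ Set.range (fun i : Fin (2 * k + 1) => (e i : ℂ) * z * ζ ^ (i : ℕ)),
        ∀ y ∈ Set.range (fun i : Fin (2 * k + 1) => (e i : ℂ) * z * ζ ^ (i : ℕ)),
          circleDist x y ≤ Real.pi - Real.pi / (2 * k + 1) := by
  have hn : Odd (2 * k + 1) := odd_two_mul_add_one k
  have hprim : IsPrimitiveRoot ζ (2 * k + 1) := by
    rw [hζ]; exact_mod_cast Complex.isPrimitiveRoot_exp (2 * k + 1) (by omega)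
  have hrot : ∀ z ∈ sphere (0 : ℂ) 1, ∀ j : ℕ, z * ζ ^ j ∈ sphere (0 : ℂ) 1 := fun z hz j => by
    rw [mem_sphere_zero_iff_norm] at hz ⊢
    rw [norm_mul, norm_pow, hz, hprim.norm'_eq_one (by omega), one_pow, one_mul]
  obtain ⟨z, hz, hdep⟩ := exists_not_linearIndependent_of_map_neg
    (EuclideanSpace.basisFun (Fin (2 * k + 1)) ℝ).toBasis (by simp)
    (isConnected_sphere (by simp [Complex.rank_real_complex]) 0 zero_le_one).isPreconnected
    (a := 1) (a' := -1) (by simp) (by simp)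
    (u := fun z (j : Fin (2 * k + 1)) => f (z * ζ ^ (j : ℕ)))
    (continuousOn_pi.mpr fun j => hf.comp (continuous_mul_const _).continuousOn
      fun z hz => hrot z hz j)
    (funext fun j => by simpa using hodd _ (hrot 1 (by simp) j))
  obtain ⟨e, he, hhull⟩ := exists_signs_zero_mem_convexHull hdep
  have himage : f '' Set.range (fun i : Fin (2 * k + 1) => (e i : ℂ) * z * ζ ^ (i : ℕ)) =
      Set.range fun i => e i • f (z * ζ ^ (i : ℕ)) := by
    rw [← Set.range_comp]
    exact congrArg Set.range (funext fun i => by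
      simpa [mul_assoc, Complex.real_smul] using map_smul_of_sign hodd (hrot z hz i) (he i))
  refine ⟨e, z, he, mem_sphere_zero_iff_norm.mp hz, himage ▸ hhull, ?_⟩
  rintro _ ⟨i, rfl⟩ _ ⟨j, rfl⟩
  have hz₀ : z ≠ 0 := by rintro rfl; simp at hz
  have := hprim.abs_arg_div_sign_mul_pow_le hn hz₀ (e := fun i => (e i : ℂ))
    (fun i => by exact_mod_cast he i) i j
  exact_mod_cast this

/-- Theorem 1.1, first part. For an odd continuous map
`f : S¹ → ℝ^{2k+1}` there exist signs `eᵢ ∈ {±1}` and `z ∈ S¹` such that `0` lies in the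
convex hull of `f(X)` where `X = {eᵢ z ζ^i : i = 0, …, 2k}`, a set of diameter at most
`π - π/(2k+1)`. -/
theorem stmt2 (k : ℕ) (hk : 1 ≤ k)
    (ζ : ℂ) (hζ : ζ = Complex.exp (2 * Real.pi * Complex.I / (2 * k + 1)))
    (f : ℂ → EuclideanSpace ℝ (Fin (2 * k + 1)))
    (hf : ContinuousOn f (sphere (0 : ℂ) 1))
    (hodd : ∀ z ∈ sphere (0 : ℂ) 1, f (-z) = -f z) :
    ∃ (e : Fin (2 * k + 1) → ℝ) (z : ℂ),
      (∀ i, e i = 1 ∨ e i = -1) ∧ ‖z‖ = 1 ∧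
      (0 : EuclideanSpace ℝ (Fin (2 * k + 1))) ∈
        convexHull ℝ (f '' Set.range (fun i : Fin (2 * k + 1) => (e i : ℂ) * z * ζ ^ (i : ℕ))) ∧
      ∀ x ∈ Set.range (fun i : Fin (2 * k + 1) => (e i : ℂ) * z * ζ ^ (i : ℕ)),
        ∀ y ∈ Set.range (fun i : Fin (2 * k + 1) => (e i : ℂ) * z * ζ ^ (i : ℕ)),
          circleDist x y ≤ Real.pi - Real.pi / (2 * k + 1) :=
  stmt2_general k ζ hζ f hf hodd
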